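/- Let r ≥ 2 be an integer and F a graph with ex(n,F) = t_r(n) + O(1). Then for all sufficiently large n, every F-free graph G on n vertices with e(G) = ex(n,F) has minimum degree at least ⌊(1 − 1/r)n⌋. -/

import Mathlib

open Finset SimpleGraph
open scoped Classical

/-- `F` has a copy in `G`: an injective graph homomorphism. -/
def SimpleGraph.ContainsCopy {α β : Type*} (F : SimpleGraph α) (G : SimpleGraph β) : Prop :=
  ∃ f : F →g G, Function.Injective f

/-- `G` is `F`-free. -/
def SimpleGraph.CopyFree {α β : Type*} (F : SimpleGraph α) (G : SimpleGraph β) : Prop :=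
  ¬ F.ContainsCopy G

/-- Number of edges of a graph. -/
noncomputable def edgeCount {V : Type*} (G : SimpleGraph V) : ℕ := G.edgeSet.ncard

/-- Degree of a vertex. -/
noncomputable def degCount {V : Type*} (G : SimpleGraph V) (v : V) : ℕ := (G.neighborSet v).ncard

/-- Turán number: max number of edges of an F-free graph on n vertices. -/
noncomputable def exNum {α : Type*} (F : SimpleGraph α) (n : ℕ) : ℕ :=
  sSup {m | ∃ G : SimpleGraph (Fin n), F.CopyFree G ∧ edgeCount G = m}

/-- Number of edges of the Turán graph `T_r(n)`. -/
noncomputable def turanNum (r n : ℕ) : ℕ := edgeCount (turanGraph n r)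

/-- The hypothesis `ex(n,F) = t_r(n) + O(1)`. -/
def ExIsTuranPlusO1 {α : Type*} (F : SimpleGraph α) (r : ℕ) : Prop :=
  ∃ C : ℤ, ∀ n : ℕ, |(exNum F n : ℤ) - (turanNum r n : ℤ)| ≤ C

/-- `c0 = limsup (ex(n,F) - t_r(n))`. -/
noncomputable def exC0 {α : Type*} (F : SimpleGraph α) (r : ℕ) : ℤ :=
  Filter.limsup (fun n : ℕ => (exNum F n : ℤ) - (turanNum r n : ℤ)) Filter.atTop

/-- The signless Laplacian matrix `Q(G) = D(G) + A(G)` of a graph. -/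
noncomputable def signlessLaplacian {V : Type*} (G : SimpleGraph V) : Matrix V V ℝ :=
  Matrix.of fun u v =>
    (if u = v then (degCount G u : ℝ) else 0) + (if G.Adj u v then 1 else 0)

/-- The signless Laplacian spectral radius `q(G)`: the largest eigenvalue of `Q(G)`. -/
noncomputable def qRad {V : Type*} [Fintype V] [DecidableEq V] (G : SimpleGraph V) : ℝ :=
  sSup (spectrum ℝ (signlessLaplacian G))

/-- Number of edges of `G` with both endpoints in `s`. -/
noncomputable def edgesInside {V : Type*} (G : SimpleGraph V) (s : Set V) : ℕ :=
  {e ∈ G.edgeSet | ∀ v ∈ e, v ∈ s}.ncard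

/-- `e(G_in)` for a partition `P`. -/
noncomputable def edgesIn {V : Type*} (G : SimpleGraph V) {r : ℕ} (P : Fin r → Finset V) : ℕ :=
  ∑ i, edgesInside G (P i)

/-- `e(G_out)`: missing cross pairs for a partition `P`. -/
noncomputable def missingCross {V : Type*} (G : SimpleGraph V) {r : ℕ} (P : Fin r → Finset V) : ℕ :=
  {e : Sym2 V | ¬ e.IsDiag ∧ e ∉ G.edgeSet ∧ ¬ ∃ i, ∀ v ∈ e, v ∈ P i}.ncard

/-- `P` is a partition of the vertex set into `r` parts. -/
def IsVertexPartition {V : Type*} {r : ℕ} (P : Fin r → Finset V) : Prop :=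
  (∀ i j, i ≠ j → Disjoint (P i) (P j)) ∧ ∀ v, ∃ i, v ∈ P i

/-! ### Auxiliary lemmas -/

section AuxBasic

lemma edgeCount_eq_card {V : Type*} [Fintype V] (G : SimpleGraph V) :
    edgeCount G = G.edgeFinset.card := by
  rw [edgeCount, ← SimpleGraph.coe_edgeFinset, Set.ncard_coe_finset]

lemma degCount_eq_degree {V : Type*} [Fintype V] (G : SimpleGraph V) (v : V) :
    degCount G v = G.degree v := by
  rw [degCount, Set.ncard_eq_toFinset_card', SimpleGraph.degree, SimpleGraph.neighborFinset_def]

lemma handshake {V : Type*} [Fintype V] (G : SimpleGraph V) :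
    ∑ v, degCount G v = 2 * edgeCount G := by
  simp_rw [degCount_eq_degree, edgeCount_eq_card]
  exact G.sum_degrees_eq_twice_card_edges

lemma free_comap {α V W : Type*} (F : SimpleGraph α) (G : SimpleGraph W) (f : V → W)
    (hf : Function.Injective f) (h : F.CopyFree G) : F.CopyFree (G.comap f) := by
  rintro ⟨g, hg⟩
  exact h ⟨SimpleGraph.Hom.comp ⟨f, fun a => a⟩ g, hf.comp hg⟩

lemma degCount_comap_equiv {V W : Type*} (G : SimpleGraph W) (σ : V ≃ W) (v : V) :
    degCount (G.comap σ) v = degCount G (σ v) := by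
  rw [degCount, degCount]
  have h1 : (G.comap σ).neighborSet v = σ ⁻¹' (G.neighborSet (σ v)) := rfl
  rw [h1, ← Equiv.image_symm_eq_preimage]
  exact Set.ncard_image_of_injective _ σ.symm.injective

lemma edgeCount_comap_equiv {V W : Type*} (G : SimpleGraph W) (σ : V ≃ W) :
    edgeCount (G.comap σ) = edgeCount G := by
  have ι : (G.comap σ) ≃g G := ⟨σ, Iff.rfl⟩
  rw [edgeCount, edgeCount, ← Nat.card_coe_set_eq, ← Nat.card_coe_set_eq]
  exact Nat.card_congr ι.mapEdgeSet

lemma edgeCount_del {n : ℕ} (G : SimpleGraph (Fin (n+1))) :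
    edgeCount G = edgeCount (G.comap (Fin.castSucc)) + degCount G (Fin.last n) := by
  rw [edgeCount_eq_card, edgeCount_eq_card, degCount_eq_degree,
    ← SimpleGraph.card_incidenceFinset_eq_degree, SimpleGraph.incidenceFinset_eq_filter]
  have hsplit := Finset.card_filter_add_card_filter_not
    (s := G.edgeFinset) (p := fun e => Fin.last n ∈ e)
  rw [← hsplit, add_comm]
  congr 1
  symm
  apply Finset.card_bij (i := fun e _ => Sym2.map Fin.castSucc e)
  · intro e he
    induction e with
    | _ a b =>
      simp only [SimpleGraph.mem_edgeFinset, SimpleGraph.mem_edgeSet] at he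
      simp only [Finset.mem_filter, Sym2.map_pair_eq, SimpleGraph.mem_edgeFinset,
        SimpleGraph.mem_edgeSet, Sym2.mem_iff]
      refine ⟨he, ?_⟩
      push_neg
      exact ⟨(Fin.castSucc_lt_last a).ne', (Fin.castSucc_lt_last b).ne'⟩
  · intro e₁ h₁ e₂ h₂ h
    exact Sym2.map.injective (Fin.castSucc_injective n) h
  · intro e he
    simp only [Finset.mem_filter, SimpleGraph.mem_edgeFinset, SimpleGraph.mem_edgeSet] at he
    induction e with
    | _ a b =>
      obtain ⟨hab, hlast⟩ := he
      simp only [Sym2.mem_iff] at hlast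
      push_neg at hlast
      refine ⟨s(Fin.castPred a hlast.1.symm, Fin.castPred b hlast.2.symm), ?_, ?_⟩
      · simp only [SimpleGraph.mem_edgeFinset, SimpleGraph.mem_edgeSet, SimpleGraph.comap_adj,
          Fin.castSucc_castPred]
        exact hab
      · simp [Sym2.map_pair_eq, Fin.castSucc_castPred]

end AuxBasic

section AuxCount

lemma card_fin_filter (m : ℕ) (p : ℕ → Prop) [DecidablePred p] :
    ((univ : Finset (Fin m)).filter (fun w => p w.val)).card = ((range m).filter p).card := by
  apply Finset.card_bij (i := fun w _ => w.val)
  · intro w hw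
    simp only [Finset.mem_filter, Finset.mem_range, Fin.is_lt, true_and]
    simpa using hw
  · intro a _ b _ h; exact Fin.val_injective h
  · intro x hx
    simp only [Finset.mem_filter, Finset.mem_range] at hx
    exact ⟨⟨x, hx.1⟩, by simpa using hx.2, rfl⟩

lemma cnt_exact (M r : ℕ) (hr : 0 < r) :
    ((range (M+1)).filter (fun x => x % r = M % r)).card = M / r + 1 := by
  rw [← Finset.card_range (M / r + 1)]
  apply Finset.card_bij (i := fun x _ => x / r)
  · intro x hx
    simp only [Finset.mem_filter, Finset.mem_range] at hx ⊢
    have : x / r ≤ M / r := Nat.div_le_div_right (Nat.lt_succ_iff.1 hx.1)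
    omega
  · intro a ha b hb h
    simp only [Finset.mem_filter] at ha hb
    rw [← Nat.mod_add_div' a r, ← Nat.mod_add_div' b r, ha.2, hb.2, h]
  · intro k hk
    simp only [Finset.mem_range] at hk
    refine ⟨M % r + k * r, ?_, ?_⟩
    · simp only [Finset.mem_filter, Finset.mem_range]
      constructor
      · have h1 : k * r ≤ (M / r) * r := Nat.mul_le_mul_right r (by omega)
        have h2 : M % r + M / r * r = M := Nat.mod_add_div' M r
        omega
      · rw [Nat.add_mul_mod_self_right, Nat.mod_mod_of_dvd M dvd_rfl]
    · rw [Nat.add_mul_div_right _ _ hr, Nat.div_eq_of_lt (Nat.mod_lt M hr), zero_add]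

lemma turan_deg_add_class (m r : ℕ) (v : Fin m) :
    degCount (turanGraph m r) v
      + ((univ : Finset (Fin m)).filter (fun w => w.val % r = v.val % r)).card = m := by
  rw [degCount_eq_degree, SimpleGraph.degree]
  have key := Finset.card_filter_add_card_filter_not
    (s := (univ : Finset (Fin m))) (p := fun w => w.val % r = v.val % r)
  rw [Finset.card_univ, Fintype.card_fin] at key
  rw [add_comm]
  convert key using 3
  ext w
  simp only [SimpleGraph.mem_neighborFinset, Finset.mem_filter, Finset.mem_univ, true_and]
  exact ⟨fun h hh => h hh.symm, fun h hh => h hh.symm⟩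

lemma turan_comap (n r : ℕ) :
    (turanGraph (n+1) r).comap (Fin.castSucc) = turanGraph n r := by
  ext a b
  simp [turanGraph, SimpleGraph.comap]

lemma turan_succ (r n : ℕ) (hr : 0 < r) :
    turanNum r (n+1) = turanNum r n + (n - n/r) := by
  have h := edgeCount_del (turanGraph (n+1) r)
  rw [turan_comap] at h
  have hdeg : degCount (turanGraph (n+1) r) (Fin.last n) = n - n/r := by
    have h2 := turan_deg_add_class (n+1) r (Fin.last n)
    have h3 : ((univ : Finset (Fin (n+1))).filter
        (fun w => w.val % r = (Fin.last n).val % r)).card = n / r + 1 :=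
      (card_fin_filter (n+1) (fun x => x % r = (Fin.last n).val % r)).trans
        (by simpa [Fin.val_last] using cnt_exact n r hr)
    have h4 : n / r ≤ n := Nat.div_le_self n r
    omega
  rw [hdeg] at h
  exact h

lemma turan_lb (r n : ℕ) (hr : 2 ≤ r) : n - 1 ≤ turanNum r n := by
  induction n with
  | zero => simp
  | succ n ih =>
    rw [turan_succ r n (by omega)]
    rcases Nat.eq_zero_or_pos n with h | h
    · simp [h]
    · have : n / r < n := Nat.div_lt_self h hr
      omega

/-- The key identity `2 t_r(m) + ∑ c_i² = m²`. -/
lemma turan_sq_identity (m r : ℕ) (hr : 0 < r) :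
    2 * turanNum r m
      + ∑ i ∈ range r, (((range m).filter (fun x => x % r = i)).card) ^ 2 = m * m := by
  have hsum : ∑ v : Fin m, (degCount (turanGraph m r) v
      + ((univ : Finset (Fin m)).filter (fun w => w.val % r = v.val % r)).card) = m * m := by
    rw [Finset.sum_congr rfl (fun v _ => turan_deg_add_class m r v)]
    simp [mul_comm]
  rw [Finset.sum_add_distrib, handshake] at hsum
  have hclass : ∑ v : Fin m,
      ((univ : Finset (Fin m)).filter (fun w => w.val % r = v.val % r)).card
      = ∑ i ∈ range r, (((range m).filter (fun x => x % r = i)).card) ^ 2 := by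
    have e1 : ∀ v : Fin m,
        ((univ : Finset (Fin m)).filter (fun w => w.val % r = v.val % r)).card
        = ((range m).filter (fun x => x % r = v.val % r)).card :=
      fun v => card_fin_filter m (fun x => x % r = v.val % r)
    rw [Finset.sum_congr rfl (fun v _ => e1 v)]
    rw [Fin.sum_univ_eq_sum_range (fun x => ((range m).filter (fun y => y % r = x % r)).card)]
    rw [← Finset.sum_fiberwise_of_maps_to (g := fun x => x % r) (t := range r)
      (fun x _ => Finset.mem_range.2 (Nat.mod_lt x hr))]
    apply Finset.sum_congr rfl
    intro i _
    have : ∀ x ∈ (range m).filter (fun x => x % r = i),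
        ((range m).filter (fun y => y % r = x % r)).card
        = ((range m).filter (fun y => y % r = i)).card := by
      intro x hx
      simp only [Finset.mem_filter] at hx
      rw [hx.2]
    rw [Finset.sum_congr rfl this, Finset.sum_const, smul_eq_mul, sq]
  rw [hclass] at hsum
  exact hsum

end AuxCount

section AuxEx

variable {α : Type*} (F : SimpleGraph α)

lemma exSet_bddAbove (n : ℕ) :
    BddAbove {m | ∃ G : SimpleGraph (Fin n), F.CopyFree G ∧ edgeCount G = m} := by
  refine ⟨Fintype.card (Sym2 (Fin n)), ?_⟩
  rintro m ⟨G, _, rfl⟩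
  rw [edgeCount_eq_card, ← Finset.card_univ]
  exact Finset.card_le_univ _

lemma le_exNum {n : ℕ} {G : SimpleGraph (Fin n)} (h : F.CopyFree G) :
    edgeCount G ≤ exNum F n :=
  le_csSup (exSet_bddAbove F n) ⟨G, h, rfl⟩

lemma exNum_exists {n : ℕ} (h : 0 < exNum F n) :
    ∃ G : SimpleGraph (Fin n), F.CopyFree G ∧ edgeCount G = exNum F n := by
  have hne : {m | ∃ G : SimpleGraph (Fin n), F.CopyFree G ∧ edgeCount G = m}.Nonempty := by
    by_contra hne
    rw [Set.not_nonempty_iff_eq_empty] at hne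
    rw [exNum, hne] at h
    simp at h
  exact Nat.sSup_mem hne (exSet_bddAbove F n)

lemma delete_vertex {n : ℕ} (G : SimpleGraph (Fin (n+1))) (hfree : F.CopyFree G) (v : Fin (n+1)) :
    edgeCount G ≤ degCount G v + exNum F n := by
  set σ : Fin (n+1) ≃ Fin (n+1) := Equiv.swap (Fin.last n) v with hσ
  have hH : edgeCount (G.comap σ) = edgeCount G := edgeCount_comap_equiv G σ
  have hHfree : F.CopyFree (G.comap σ) := free_comap F G σ σ.injective hfree
  have hdel := edgeCount_del (G.comap σ)
  have hdeg : degCount (G.comap σ) (Fin.last n) = degCount G v := by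
    rw [degCount_comap_equiv]
    congr 1
    exact Equiv.swap_apply_left _ _
  have hfree' : F.CopyFree ((G.comap σ).comap Fin.castSucc) :=
    free_comap F _ _ (Fin.castSucc_injective n) hHfree
  have hle : edgeCount ((G.comap σ).comap Fin.castSucc) ≤ exNum F n := le_exNum F hfree'
  omega

end AuxEx

section AuxGap

lemma gap_lemma (r c m : ℕ) (hr : 2 ≤ r) (hm : r * (2*c+1) ≤ m) :
    2 * turanNum r m + 2 * c < m * (m - (m-1)/r) := by
  have hr0 : 0 < r := by omega
  have hm1 : 1 ≤ m := by
    have : r * 1 ≤ r * (2*c+1) := Nat.mul_le_mul_left r (by omega)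
    omega
  set p := (m-1)/r with hp
  have hid := turan_sq_identity m r hr0
  set cnt := fun i => ((range m).filter (fun x => x % r = i)).card with hcnt
  have hsumcnt : ∑ i ∈ range r, cnt i = m := by
    conv_rhs => rw [← Finset.card_range m]
    exact (Finset.card_eq_sum_card_fiberwise (f := fun x => x % r) (t := range r)
      (fun x _ => Finset.mem_range.2 (Nat.mod_lt x hr0))).symm
  set S := (∑ i ∈ range r, (cnt i)^2 : ℕ) with hS
  have hCS : (m:ℤ)^2 ≤ (r:ℤ) * (S:ℤ) := by
    have hcs := sq_sum_le_card_mul_sum_sq (s := range r) (f := fun i => (cnt i : ℤ))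
    rw [Finset.card_range] at hcs
    calc (m:ℤ)^2 = (∑ i ∈ range r, (cnt i : ℤ))^2 := by
          rw [← Nat.cast_sum, hsumcnt]
      _ ≤ (r:ℤ) * ∑ i ∈ range r, (cnt i : ℤ)^2 := hcs
      _ = (r:ℤ) * (S:ℤ) := by rw [hS]; push_cast; ring
  have hple : p * r ≤ m - 1 := Nat.div_mul_le_self _ _
  have hplem : p ≤ m := by
    have : p ≤ p * r := Nat.le_mul_of_pos_right p hr0
    omega
  have hkey : (m:ℤ)*p + 2*c + 1 ≤ (S:ℤ) := by
    have h1 : (p:ℤ) * r ≤ (m:ℤ) - 1 := by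
      have : ((p * r : ℕ) : ℤ) ≤ ((m - 1 : ℕ) : ℤ) := by exact_mod_cast hple
      push_cast at this
      omega
    have h2 : (1:ℤ) ≤ (m:ℤ) - r*p := by linarith [h1, mul_comm (p:ℤ) (r:ℤ)]
    have h3 : (m:ℤ)*1 ≤ (m:ℤ)*((m:ℤ) - r*p) :=
      mul_le_mul_of_nonneg_left h2 (by positivity)
    have h4 : (r:ℤ)*(2*c+1) ≤ (m:ℤ) := by exact_mod_cast hm
    have h5 : (r:ℤ) * ((m:ℤ)*p + 2*c + 1) ≤ (r:ℤ) * (S:ℤ) := by nlinarith [hCS, h3, h4]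
    have h6 := le_of_mul_le_mul_left h5 (by exact_mod_cast hr0 : (0:ℤ) < (r:ℤ))
    linarith
  have hidz : 2 * (turanNum r m : ℤ) + (S:ℤ) = (m:ℤ) * m := by exact_mod_cast hid
  zify [hplem]
  nlinarith [hkey, hidz]

end AuxGap

section AuxAscent

variable {α : Type*} (F : SimpleGraph α)

lemma exNum_succ_le (r c : ℕ) (hr : 2 ≤ r)
    (hub : ∀ n, exNum F n ≤ turanNum r n + c) (hlb : ∀ n, turanNum r n ≤ exNum F n + c)
    (n : ℕ) (hn : r * (2*c+1) ≤ n + 1) (hn2 : c + 2 ≤ n) :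
    exNum F (n+1) ≤ exNum F n + (n - n/r) := by
  have hpos : 0 < exNum F (n+1) := by
    have h1 := hlb (n+1)
    have h2 := turan_lb r (n+1) hr
    omega
  obtain ⟨G, hGfree, hGcount⟩ := exNum_exists F hpos
  by_cases hd : ∃ v, degCount G v ≤ n - n/r
  · obtain ⟨v, hv⟩ := hd
    have := delete_vertex F G hGfree v
    omega
  · push_neg at hd
    have hsum : (n+1) * (n - n/r + 1) ≤ ∑ v, degCount G v := by
      have := Finset.card_nsmul_le_sum (univ : Finset (Fin (n+1))) (degCount G)
        (n - n/r + 1) (fun v _ => hd v)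
      simpa [Finset.card_univ, smul_eq_mul] using this
    rw [handshake] at hsum
    have hgap := gap_lemma r c (n+1) hr hn
    have hdiv : (n+1) - (n+1-1)/r = n - n/r + 1 := by
      have := Nat.div_le_self n r
      simp only [Nat.add_sub_cancel]
      omega
    rw [hdiv] at hgap
    have hub' := hub (n+1)
    omega

end AuxAscent

/-- edge-extremal F-free graphs have minimum degree at least
`⌊(1 - 1/r) n⌋`. -/
theorem stmt_5 {α : Type*} (F : SimpleGraph α) (r : ℕ) (hr : 2 ≤ r)
    (hO : ExIsTuranPlusO1 F r) :
    ∃ N : ℕ, ∀ n ≥ N, ∀ G : SimpleGraph (Fin n), F.CopyFree G →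
      edgeCount G = exNum F n →
      ∀ v, ⌊(1 - 1/(r : ℝ)) * n⌋ ≤ (degCount G v : ℤ) := by
  obtain ⟨C, hC⟩ := hO
  have hCnn : 0 ≤ C := le_trans (abs_nonneg _) (hC 0)
  set c : ℕ := C.toNat with hc
  have hCc : C = (c : ℤ) := by simp [hc, Int.toNat_of_nonneg hCnn]
  have hub : ∀ n, exNum F n ≤ turanNum r n + c := by
    intro n
    have h := abs_le.1 (hC n)
    rw [hCc] at h
    omega
  have hlb : ∀ n, turanNum r n ≤ exNum F n + c := by
    intro n
    have h := abs_le.1 (hC n)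
    rw [hCc] at h
    omega
  set N1 : ℕ := r * (2*c+1) + c + 3 with hN1
  set θ : ℕ → ℤ := fun n => (exNum F n : ℤ) - turanNum r n with hθ
  have hmono : ∀ n, N1 ≤ n → θ (n+1) ≤ θ n := by
    intro n hn
    have h := exNum_succ_le F r c hr hub hlb n (by omega) (by omega)
    have ht := turan_succ r n (by omega)
    simp only [hθ]
    omega
  have hanti : ∀ a b, N1 ≤ a → a ≤ b → θ b ≤ θ a := by
    intro a b ha hab
    induction b, hab using Nat.le_induction with
    | base => exact le_refl _
    | succ b hab ih => exact le_trans (hmono b (by omega)) ih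
  have hnn : ∀ n, 0 ≤ θ n + c := by
    intro n
    have := hlb n
    simp only [hθ]
    omega
  set u : ℕ → ℕ := fun k => (θ (N1 + k) + c).toNat with hu
  have humono : ∀ k l, k ≤ l → u l ≤ u k := by
    intro k l hkl
    have := hanti (N1 + k) (N1 + l) (by omega) (by omega)
    simp only [hu]
    omega
  obtain ⟨k0, hk0⟩ : ∃ k0, u k0 = sInf (Set.range u) :=
    Nat.sInf_mem (Set.range_nonempty u)
  have hconstu : ∀ k, k0 ≤ k → u k = u k0 := by
    intro k hk
    have h1 := humono k0 k hk
    have h2 : u k0 ≤ u k := hk0 ▸ Nat.sInf_le ⟨k, rfl⟩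
    omega
  have hconst : ∀ n, N1 + k0 ≤ n → θ n = θ (N1 + k0) := by
    intro n hn
    have h1 := hconstu (n - N1) (by omega)
    have hrw : N1 + (n - N1) = n := by omega
    rw [hu] at h1
    simp only at h1
    rw [hrw] at h1
    have h2 := hnn n
    have h3 := hnn (N1 + k0)
    omega
  refine ⟨N1 + k0 + 1, ?_⟩
  intro n hn G hGfree hGext v
  obtain ⟨m, rfl⟩ : ∃ m, n = m + 1 := ⟨n - 1, by omega⟩
  have hdel := delete_vertex F G hGfree v
  have ht := turan_succ r m (by omega)
  have hθ1 := hconst (m+1) (by omega)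
  have hθ2 := hconst m (by omega)
  have hkey : ((m - m/r : ℕ) : ℤ) ≤ (degCount G v : ℤ) := by
    rw [hGext] at hdel
    simp only [hθ] at hθ1 hθ2
    omega
  refine le_trans ?_ hkey
  -- `⌊(1 - 1/r)(m+1)⌋ ≤ m - m/r`
  have hrne : (r:ℝ) ≠ 0 := by
    have : (0:ℕ) < r := by omega
    exact_mod_cast this.ne'
  have hr0 : (0:ℝ) < (r:ℝ) := by
    have : (0:ℕ) < r := by omega
    exact_mod_cast this
  have hq : (m/r : ℕ) * r ≤ m := Nat.div_mul_le_self m r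
  have hqm : (m/r : ℕ) ≤ m := Nat.div_le_self m r
  have hcast : (((m - m/r : ℕ)) : ℝ) = (m:ℝ) - ((m/r : ℕ) : ℝ) := by
    push_cast [hqm]
    ring
  have hlt : (1 - 1/(r:ℝ)) * (((m+1 : ℕ)) : ℝ) < ((m - m/r : ℕ) : ℝ) + 1 := by
    rw [hcast]
    have h1 : ((m/r:ℕ):ℝ) * r ≤ (m:ℝ) := by exact_mod_cast hq
    have h2 : ((m/r:ℕ):ℝ) < ((m:ℝ)+1)/r := by
      rw [lt_div_iff₀ hr0]; linarith
    have h3 : (1 - 1/(r:ℝ)) * ((m:ℝ)+1) = ((m:ℝ)+1) - ((m:ℝ)+1)/r := by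
      field_simp
    push_cast
    rw [h3]
    linarith
  have hfl : ⌊(1 - 1/(r:ℝ)) * (((m+1:ℕ)) : ℝ)⌋ < ((m - m/r : ℕ) : ℤ) + 1 := by
    apply Int.floor_lt.2
    push_cast at hlt ⊢
    linarith
  omega
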